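/- Assume Hypothesis H(0), so that in particular every nontrivial zero has the form ρ = 1/2 + iγ. Then for every sufficiently small ε > 0 there exists a constant C > 0 such that for all sufficiently large x and all real h with x^{3ε} ≤ h ≤ x^{1−ε}, one has |Σ_{|γ| ≤ x/h} ∫_x^{x+h} u^{ρ−1} du| ≤ C·h^{1/2}·x^ε. -/

import Mathlib

open scoped BigOperators

noncomputable section

attribute [local instance] Classical.propDecidable

/-- The multiplicity (analytic order) of `riemannZeta` at `ρ`, as a natural number. -/
def zetaOrder (ρ : ℂ) : ℕ :=
  if h : AnalyticAt ℂ riemannZeta ρ then (analyticOrderAt riemannZeta ρ).toNat else 0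

/-- `ρ` is a nontrivial zero of the Riemann zeta function. -/
def IsNontrivialZero (ρ : ℂ) : Prop :=
  riemannZeta ρ = 0 ∧ 0 < ρ.re ∧ ρ.re < 1

/-- Weight of `ρ`: its multiplicity if it is a nontrivial zero with `|Im ρ| ≤ T`, else `0`. -/
def zw (T : ℝ) (ρ : ℂ) : ℕ :=
  if IsNontrivialZero ρ ∧ |ρ.im| ≤ T then zetaOrder ρ else 0

/-- Weight of `ρ`: its multiplicity if it is a nontrivial zero with `U < |Im ρ| ≤ T`, else `0`. -/
def zwU (U T : ℝ) (ρ : ℂ) : ℕ :=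
  if IsNontrivialZero ρ ∧ U < |ρ.im| ∧ |ρ.im| ≤ T then zetaOrder ρ else 0

/-- The extended pair-correlation function
`F(X,T,τ) = 4 Σ_{-T ≤ γ,γ' ≤ T} X^{i(γ-γ')}/(4+τ²(γ-γ')²)`,
the (real-valued) sum being over ordered pairs of imaginary parts of nontrivial zeta
zeros in `[-T,T]`, counted with multiplicity. -/
def Fpc (X T τ : ℝ) : ℝ :=
  4 * ∑ᶠ ρ : ℂ, ∑ᶠ ρ' : ℂ, (zw T ρ : ℝ) * (zw T ρ') *
    (((X : ℂ) ^ (Complex.I * ((ρ.im - ρ'.im : ℝ) : ℂ))).re /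
      (4 + τ ^ 2 * (ρ.im - ρ'.im) ^ 2))

/-- `Σ(X,T) = Σ_{|γ| ≤ T} X^{iγ}` over imaginary parts of nontrivial zeta zeros,
counted with multiplicity. -/
def SigmaXT (X T : ℝ) : ℂ :=
  ∑ᶠ ρ : ℂ, (zw T ρ : ℂ) * (X : ℂ) ^ (Complex.I * (ρ.im : ℂ))

/-- `Σ(X,U,T) = Σ_{U < |γ| ≤ T} X^{iγ}`. -/
def SigmaUT (X U T : ℝ) : ℂ :=
  ∑ᶠ ρ : ℂ, (zwU U T ρ : ℂ) * (X : ℂ) ^ (Complex.I * (ρ.im : ℂ))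

/-- `Σ(X,T;v) = Σ_{|γ| ≤ T} X^{iγ} e^{iγv}`. -/
def SigmaV (X T v : ℝ) : ℂ :=
  ∑ᶠ ρ : ℂ, (zw T ρ : ℂ) * (X : ℂ) ^ (Complex.I * (ρ.im : ℂ)) *
    Complex.exp (Complex.I * (ρ.im : ℝ) * (v : ℂ))

/-- The Chebyshev function `ψ(x) = Σ_{n ≤ x} Λ(n)`. -/
def psi (x : ℝ) : ℝ :=
  ∑ n ∈ Finset.Iic ⌊x⌋₊, ArithmeticFunction.vonMangoldt n

/-- `J(X,Y,h) = ∫_X^{X+Y} (ψ(x+h) - ψ(x) - h)² dx`. -/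
def Jpc (X Y h : ℝ) : ℝ :=
  ∫ x in X..(X + Y), (psi (x + h) - psi x - h) ^ 2

/-- The Riemann Hypothesis: every nontrivial zero of zeta has real part `1/2`. -/
def RH : Prop :=
  ∀ ρ : ℂ, IsNontrivialZero ρ → ρ.re = 1 / 2

/-- Hypothesis `H(η)` for fixed `0 < η < 1`: RH holds, and for every `ε > 0`
there is `C > 0` such that `F(X,T,τ) ≤ C T X^ε` for all sufficiently large `X`,
uniformly for `X^η ≤ T ≤ X` and `X^η/T ≤ τ ≤ 1`. -/
def HypH (η : ℝ) : Prop :=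
  RH ∧ ∀ ε : ℝ, 0 < ε → ∃ C : ℝ, 0 < C ∧ ∃ X₀ : ℝ, ∀ X : ℝ, X₀ ≤ X →
    ∀ T : ℝ, X ^ η ≤ T → T ≤ X → ∀ τ : ℝ, X ^ η / T ≤ τ → τ ≤ 1 →
      Fpc X T τ ≤ C * T * X ^ ε

/-- Hypothesis `H(0)`: RH holds, and for every `ε > 0` there is `C > 0` such that
`F(X,T,τ) ≤ C T X^ε` for all sufficiently large `X`, uniformly for
`X^ε ≤ T ≤ X` and `0 ≤ τ ≤ 1`. -/
def HypH0 : Prop :=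
  RH ∧ ∀ ε : ℝ, 0 < ε → ∃ C : ℝ, 0 < C ∧ ∃ X₀ : ℝ, ∀ X : ℝ, X₀ ≤ X →
    ∀ T : ℝ, X ^ ε ≤ T → T ≤ X → ∀ τ : ℝ, 0 ≤ τ → τ ≤ 1 →
      Fpc X T τ ≤ C * T * X ^ ε

/-!
Under RH every `u ^ (ρ - 1)` factors as `u ^ (-1/2) * u ^ (iγ)`, so the sum equals
`∫_x^{x+h} u^{-1/2} Σ(u, x/h) du`. At `τ = 0` the pair-correlation function is exactly
`|Σ(u, T)|²`, so H(0), applied with `ε/2`, gives `|Σ(u, x/h)|² ≤ C (x/h) x^ε` on `(x, x + h]`.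
The trivial estimate of the integral is then `h · x^{-1/2} · (C (x/h) x^ε)^{1/2} = (C h)^{1/2} x^{ε/2}`.
-/

open Complex ComplexConjugate Set MeasureTheory

lemma sq_norm_sum_eq_sum_sum_re {ι : Type*} (s : Finset ι) (z : ι → ℂ) :
    ‖∑ i ∈ s, z i‖ ^ 2 = ∑ i ∈ s, ∑ j ∈ s, (z i * conj (z j)).re := by
  rw [Complex.sq_norm, ← ofReal_re (normSq _), ← mul_conj, map_sum, Finset.sum_mul_sum, re_sum]
  simp only [re_sum]

lemma ofReal_cpow_I_mul_mul_conj {X : ℝ} (hX : 0 < X) (s t : ℝ) :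
    (X : ℂ) ^ (I * s) * conj ((X : ℂ) ^ (I * t)) = (X : ℂ) ^ (I * ((s - t : ℝ) : ℂ)) := by
  have hconj : conj ((X : ℂ) ^ (I * t)) = (X : ℂ) ^ (-(I * t)) := by
    rw [show -(I * t) = conj (I * t) by simp,
      cpow_conj _ _ (by simp [arg_ofReal_of_nonneg hX.le, Real.pi_ne_zero.symm]), conj_ofReal]
  rw [hconj, ← cpow_add _ _ (ofReal_ne_zero.mpr hX.ne')]
  push_cast; ring_nf

lemma ofReal_cpow_sub_one_of_re_eq_half {u : ℝ} (hu : 0 < u) {ρ : ℂ} (hρ : ρ.re = 1 / 2) :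
    (u : ℂ) ^ (ρ - 1) = (u : ℂ) ^ (-(1 / 2) : ℂ) * (u : ℂ) ^ (I * (ρ.im : ℂ)) := by
  rw [← cpow_add _ _ (ofReal_ne_zero.mpr hu.ne')]
  congr 1
  apply Complex.ext <;> simp [hρ]
  norm_num

lemma norm_integral_cpow_neg_half_mul_le {f : ℝ → ℂ} {x h M : ℝ} (hx : 0 < x) (hh : 0 ≤ h)
    (hf : ∀ u ∈ Ioc x (x + h), ‖f u‖ ≤ M) :
    ‖∫ u in x..(x + h), (u : ℂ) ^ (-(1 / 2) : ℂ) * f u‖ ≤ h * M / √x := by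
  have hbound : ∀ u ∈ uIoc x (x + h), ‖(u : ℂ) ^ (-(1 / 2) : ℂ) * f u‖ ≤ M / √x := by
    intro u hu
    rw [uIoc_of_le (by linarith)] at hu
    have hu0 : 0 < u := hx.trans hu.1
    have hM : 0 ≤ M := (norm_nonneg _).trans (hf u hu)
    rw [norm_mul, norm_cpow_eq_rpow_re_of_pos hu0]
    have hpow : u ^ (-(1 / 2) : ℂ).re = (√u)⁻¹ := by
      simp [Real.rpow_neg hu0.le, Real.sqrt_eq_rpow]
    rw [hpow, inv_mul_eq_div]
    gcongr
    · exact hf u hu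
    · exact hu.1.le
  calc _ ≤ M / √x * |x + h - x| := intervalIntegral.norm_integral_le_of_norm_le_const hbound
    _ = h * M / √x := by rw [add_sub_cancel_left, abs_of_nonneg hh]; ring

lemma rpow_half_le_rpow_of_le_sq {u x ε : ℝ} (hu : 0 ≤ u) (hx : 0 ≤ x) (hux : u ≤ x ^ 2)
    (hε : 0 ≤ ε) : u ^ (ε / 2) ≤ x ^ ε :=
  calc u ^ (ε / 2) ≤ (x ^ 2) ^ (ε / 2) := by gcongr
    _ = x ^ ε := by rw [← Real.rpow_natCast, ← Real.rpow_mul hx]; ring_nf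

lemma rpow_le_div_of_le_rpow_one_sub {x h ε : ℝ} (hx : 0 < x) (hh : 0 < h)
    (hhx : h ≤ x ^ (1 - ε)) : x ^ ε ≤ x / h := by
  rw [le_div_iff₀ hh]
  calc x ^ ε * h ≤ x ^ ε * x ^ (1 - ε) := by gcongr
    _ = x := by rw [← Real.rpow_add hx, add_sub_cancel, Real.rpow_one]

lemma finite_support_zw (T : ℝ) : (Function.support (zw T)).Finite := by
  refine ((isCompact_Icc (a := 0) (b := 1)).reProdIm (isCompact_Icc (a := -T) (b := T))
    |>.inter_riemannZetaZeros_finite).subset ?_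
  intro ρ hρ
  rw [Function.mem_support, zw] at hρ
  split_ifs at hρ with hz
  · obtain ⟨⟨hζ, hre0, hre1⟩, him⟩ := hz
    exact ⟨⟨⟨hre0.le, hre1.le⟩, abs_le.mp him⟩, hζ⟩
  · exact absurd rfl hρ

lemma finsum_eq_sum_of_zw_eq_zero {M : Type*} [AddCommMonoid M] (T : ℝ) {f : ℂ → M}
    (hf : ∀ ρ, zw T ρ = 0 → f ρ = 0) :
    ∑ᶠ ρ, f ρ = ∑ ρ ∈ (finite_support_zw T).toFinset, f ρ :=
  finsum_eq_sum_of_support_subset f fun ρ hρ => by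
    simpa using fun h => hρ (hf ρ h)

lemma re_eq_half_of_zw_ne_zero (rh : RH) {T : ℝ} {ρ : ℂ} (h : zw T ρ ≠ 0) : ρ.re = 1 / 2 := by
  rw [zw] at h
  split_ifs at h with hz
  · exact rh ρ hz.1
  · exact absurd rfl h

lemma Fpc_zero_eq_sq_norm_SigmaXT {X : ℝ} (hX : 0 < X) (T : ℝ) :
    Fpc X T 0 = ‖SigmaXT X T‖ ^ 2 := by
  have hinner : ∀ ρ : ℂ, ∑ᶠ ρ' : ℂ, (zw T ρ : ℝ) * (zw T ρ') *
      (((X : ℂ) ^ (I * ((ρ.im - ρ'.im : ℝ) : ℂ))).re / (4 + (0 : ℝ) ^ 2 * (ρ.im - ρ'.im) ^ 2)) =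
      ∑ ρ' ∈ (finite_support_zw T).toFinset, (zw T ρ : ℝ) * (zw T ρ') *
        ((X : ℂ) ^ (I * ((ρ.im - ρ'.im : ℝ) : ℂ))).re / 4 := fun ρ => by
    rw [finsum_eq_sum_of_zw_eq_zero T fun ρ' h => by simp [h]]
    simp only [zero_pow two_ne_zero, zero_mul, add_zero, mul_div_assoc]
  rw [Fpc, finsum_congr hinner, finsum_eq_sum_of_zw_eq_zero T fun ρ h => by simp [h], SigmaXT,
    finsum_eq_sum_of_zw_eq_zero T fun ρ h => by simp [h], sq_norm_sum_eq_sum_sum_re,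
    Finset.mul_sum]
  refine Finset.sum_congr rfl fun ρ _ => ?_
  rw [Finset.mul_sum]
  refine Finset.sum_congr rfl fun ρ' _ => ?_
  rw [map_mul, mul_mul_mul_comm, ofReal_cpow_I_mul_mul_conj hX, conj_natCast]
  simp only [mul_re, mul_im, natCast_re, natCast_im, zero_mul, mul_zero, add_zero, sub_zero]
  ring

lemma HypH0.sq_norm_SigmaXT_le (hH : HypH0) {ε : ℝ} (hε : 0 < ε) :
    ∃ C > 0, ∃ X₀, ∀ X ≥ X₀, ∀ T, X ^ ε ≤ T → T ≤ X → ‖SigmaXT X T‖ ^ 2 ≤ C * T * X ^ ε := by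
  obtain ⟨C, hC, X₀, hF⟩ := hH.2 ε hε
  refine ⟨C, hC, max X₀ 1, fun X hX T hXT hTX => ?_⟩
  rw [← Fpc_zero_eq_sq_norm_SigmaXT (zero_lt_one.trans_le (le_of_max_le_right hX))]
  exact hF X (le_of_max_le_left hX) T hXT hTX 0 le_rfl zero_le_one

lemma finsum_zw_mul_cpow_sub_one (rh : RH) {u : ℝ} (hu : 0 < u) (T : ℝ) :
    ∑ᶠ ρ, (zw T ρ : ℂ) * (u : ℂ) ^ (ρ - 1) = (u : ℂ) ^ (-(1 / 2) : ℂ) * SigmaXT u T := by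
  rw [SigmaXT, mul_finsum]
  refine finsum_congr fun ρ => ?_
  rcases eq_or_ne (zw T ρ) 0 with h | h
  · simp [h]
  · rw [ofReal_cpow_sub_one_of_re_eq_half hu (re_eq_half_of_zw_ne_zero rh h)]
    ring

lemma finsum_zw_mul_integral_eq (T : ℝ) {a b : ℝ} {g : ℂ → ℝ → ℂ}
    (hg : ∀ ρ, IntervalIntegrable (g ρ) volume a b) :
    ∑ᶠ ρ, (zw T ρ : ℂ) * ∫ u in a..b, g ρ u = ∫ u in a..b, ∑ᶠ ρ, (zw T ρ : ℂ) * g ρ u := by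
  simp_rw [← intervalIntegral.integral_const_mul]
  rw [finsum_eq_sum_of_zw_eq_zero T fun ρ h => by simp [h],
    ← intervalIntegral.integral_finsetSum fun ρ _ => (hg ρ).const_mul _]
  congr with u
  exact (finsum_eq_sum_of_zw_eq_zero T fun ρ h => by simp [h]).symm

lemma finsum_zw_mul_integral_cpow_sub_one (rh : RH) {a b : ℝ} (ha : 0 < a) (hb : 0 < b)
    (T : ℝ) :
    ∑ᶠ ρ, (zw T ρ : ℂ) * ∫ u in a..b, (u : ℂ) ^ (ρ - 1) =
      ∫ u in a..b, (u : ℂ) ^ (-(1 / 2) : ℂ) * SigmaXT u T := by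
  have hpos : ∀ u ∈ uIcc a b, 0 < u := fun u hu => (lt_min ha hb).trans_le hu.1
  rw [finsum_zw_mul_integral_eq T fun ρ =>
    intervalIntegral.intervalIntegrable_cpow (Or.inr fun h0 => lt_irrefl 0 (hpos 0 h0))]
  exact intervalIntegral.integral_congr fun u hu => finsum_zw_mul_cpow_sub_one rh (hpos u hu) T

/-- the bound (4-8): Under `H(0)`, for every sufficiently small `ε > 0`,
`|Σ_{|γ| ≤ x/h} ∫_x^{x+h} u^{ρ-1} du| ≤ C h^{1/2} x^ε` for `x^{3ε} ≤ h ≤ x^{1-ε}`. -/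
theorem low_zeros_sum_bound_H0 (hH : HypH0) :
    ∃ ε₀ : ℝ, 0 < ε₀ ∧ ∀ ε : ℝ, 0 < ε → ε ≤ ε₀ → ∃ C : ℝ, 0 < C ∧ ∃ x₀ : ℝ,
      ∀ x : ℝ, x₀ ≤ x → ∀ h : ℝ, x ^ (3 * ε) ≤ h → h ≤ x ^ (1 - ε) →
        ‖∑ᶠ ρ : ℂ, (zw (x / h) ρ : ℂ) * ∫ u in x..(x + h), (u : ℂ) ^ (ρ - 1)‖
          ≤ C * h ^ ((1 : ℝ) / 2) * x ^ ε := by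
  refine ⟨1, one_pos, fun ε hε hε₁ => ?_⟩
  obtain ⟨C, hC, X₀, hsq⟩ := hH.sq_norm_SigmaXT_le (half_pos hε)
  refine ⟨√C, Real.sqrt_pos.mpr hC, max X₀ 2, fun x hx h hh₁ hh₂ => ?_⟩
  have hx₂ : 2 ≤ x := le_of_max_le_right hx
  have hx₀ : 0 < x := by linarith
  have h₁ : 1 ≤ h := (Real.one_le_rpow (by linarith) (by positivity)).trans hh₁
  have hhx : h ≤ x := hh₂.trans (Real.rpow_le_self_of_one_le (by linarith) (by linarith))
  have hTlow : x ^ ε ≤ x / h := rpow_le_div_of_le_rpow_one_sub hx₀ (by linarith) hh₂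
  have hbound : ∀ u ∈ Ioc x (x + h), ‖SigmaXT u (x / h)‖ ≤ √(C * (x / h) * x ^ ε) := by
    rintro u ⟨hxu, hux⟩
    have hue : u ^ (ε / 2) ≤ x ^ ε :=
      rpow_half_le_rpow_of_le_sq (by linarith) hx₀.le (by nlinarith) hε.le
    refine Real.le_sqrt_of_sq_le ((hsq u ((le_of_max_le_left hx).trans hxu.le) _ (hue.trans hTlow)
      ((div_le_self hx₀.le h₁).trans hxu.le)).trans ?_)
    gcongr
  rw [finsum_zw_mul_integral_cpow_sub_one hH.1 hx₀ (by linarith)]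
  calc _ ≤ h * √(C * (x / h) * x ^ ε) / √x :=
        norm_integral_cpow_neg_half_mul_le hx₀ (by linarith) hbound
    _ = √C * √h * √(x ^ ε) := by
        rw [Real.sqrt_mul (by positivity), Real.sqrt_mul hC.le, Real.sqrt_div hx₀.le]
        field_simp
        exact (Real.sq_sqrt (by linarith)).symm
    _ ≤ √C * h ^ ((1 : ℝ) / 2) * x ^ ε := by
        rw [Real.sqrt_eq_rpow h]
        gcongr
        exact Real.sqrt_le_self_iff.mpr (Or.inr (Real.one_le_rpow (by linarith) hε.le))

end
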